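/- The axiom of infinity holds for well-founded extensional apgs: there exists a well-founded extensional apg Ω (on a type in a fixed universe) such that (i) some W ⋿ Ω has no members (∀ Z, ¬(Z ⋿ W)); (ii) for all well-founded extensional apgs W and S, if W ⋿ Ω and S is a successor of W then S ⋿ Ω; and (iii) for every well-founded extensional apg T satisfying the analogues of (i) and (ii) — namely, every well-founded extensional apg with no members satisfies ⋿ T, and whenever W ⋿ T and S is a successor of W then S ⋿ T — every W with W ⋿ Ω satisfies W ⋿ T. -/

import Mathlib

universe u v

/-- A relation is (inductively) well-founded if every inductive subset is the whole type:
`S` is inductive when `x ∈ S` whenever every child of `x` is in `S`. -/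
def IsWFRel {X : Type u} (r : X → X → Prop) : Prop :=
  ∀ S : Set X, (∀ x, (∀ y, r y x → y ∈ S) → x ∈ S) → S = Set.univ

/-- A relation is extensional if nodes with the same children are equal. -/
def IsExtRel {X : Type u} (r : X → X → Prop) : Prop :=
  ∀ x y, (∀ z, r z x ↔ r z y) → x = y

/-- `Below r x` is the full subgraph `X/x` of nodes admitting a (possibly empty) path to `x`. -/
def Below {X : Type u} (r : X → X → Prop) (x : X) : Type u :=
  {z : X // Relation.ReflTransGen r z x}

/-- The induced relation on the subgraph `X/x`. -/
def belowRel {X : Type u} (r : X → X → Prop) (x : X) :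
    Below r x → Below r x → Prop :=
  fun a b => r a.1 b.1

/-- The root of the pointed subgraph `X/x`. -/
def belowRoot {X : Type u} (r : X → X → Prop) (x : X) : Below r x :=
  ⟨x, Relation.ReflTransGen.refl⟩

/-- Isomorphism of pointed graphs: a relation-preserving-and-reflecting bijection
taking the first distinguished point to the second. -/
def PIso {X : Type u} {Y : Type v} (rX : X → X → Prop) (rY : Y → Y → Prop)
    (x : X) (y : Y) : Prop :=
  ∃ f : X ≃ Y, (∀ a b, rX a b ↔ rY (f a) (f b)) ∧ f x = y

/-- A simulation of graphs. -/
def IsSimulation {X : Type u} {Y : Type v} (rX : X → X → Prop)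
    (rY : Y → Y → Prop) (f : X → Y) : Prop :=
  (∀ a b, rX a b → rY (f a) (f b)) ∧
  (∀ x y, rY y (f x) → ∃ a, rX a x ∧ f a = y)

/-- A bisimulation between graphs. -/
def IsBisimulation {X : Type u} {Y : Type v} (rX : X → X → Prop)
    (rY : Y → Y → Prop) (R : X → Y → Prop) : Prop :=
  ∀ x y, R x y →
    (∀ x', rX x' x → ∃ y', rY y' y ∧ R x' y') ∧
    (∀ y', rY y' y → ∃ x', rX x' x ∧ R x' y')

/-- A bi-entire relation. -/
def BiEntire {X : Type u} {Y : Type v} (R : X → Y → Prop) : Prop :=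
  (∀ x, ∃ y, R x y) ∧ (∀ y, ∃ x, R x y)

/-- A well-founded extensional accessible pointed graph ("apg") on a type in universe `u`. -/
structure WEApg : Type (u + 1) where
  carrier : Type u
  rel : carrier → carrier → Prop
  root : carrier
  acc : ∀ x, Relation.ReflTransGen rel x root
  wf : IsWFRel rel
  ext : IsExtRel rel

/-- Isomorphism of (the underlying pointed graphs of) apgs. -/
def WEApg.Iso (X Y : WEApg.{u}) : Prop :=
  PIso X.rel Y.rel X.root Y.root

/-- Membership of the pointed graph `(W, rW, w)` in the pointed graph `(Y, rY, y)`: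
`(W, rW, w)` is isomorphic as a pointed graph to `(Y, rY)/z` for some child `z` of `y`. -/
def MemPGAt {W : Type u} {Y : Type v} (rW : W → W → Prop) (w : W)
    (rY : Y → Y → Prop) (y : Y) : Prop :=
  ∃ z, rY z y ∧ PIso rW (belowRel rY z) w (belowRoot rY z)

/-- `X ⋿ Y` for apgs: `X` is isomorphic as a pointed graph to `Y/y` for some member
(child of the root) `y` of `Y`. -/
def WEApg.Mem (X Y : WEApg.{u}) : Prop :=
  MemPGAt X.rel X.root Y.rel Y.root

/-- `S` is a successor of `W`: the members of `S` are the members of `W` together with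
`W` itself (up to isomorphism of pointed graphs). -/
def IsSuccOf (S W : WEApg.{u}) : Prop :=
  ∀ Z : WEApg.{u}, Z.Mem S ↔ (Z.Mem W ∨ Z.Iso W)

/-!
The Mostowski collapse sends a well-founded extensional apg `X` to the ZF set `X.set`, and for
accessible graphs it is a complete invariant: `X` and `Y` are isomorphic iff `X.set = Y.set`,
since both collapses are injective with the same image, the transitive closure of the root's
set. Consequently `X ⋿ Y` iff `X.set ∈ Y.set`, and `S` is a successor of `W` iff
`S.set = W.set ∪ {W.set}`. The well-order `ℕ∞` pointed at `⊤` collapses to the von Neumann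
ordinal `ω`, and the three properties reduce to those of `ω`: `∅ ∈ ω`, closure under
successor, and every element of `ω` being a finite ordinal `0, 1, 2, …`.
-/

open Relation

theorem isWFRel_iff_wellFounded {X : Type u} {r : X → X → Prop} :
    IsWFRel r ↔ WellFounded r := by
  constructor
  · intro h
    have hacc := h {x | Acc r x} fun x hx => Acc.intro x hx
    exact ⟨fun x => Set.eq_univ_iff_forall.1 hacc x⟩
  · intro h S hS
    exact Set.eq_univ_iff_forall.2 fun x => h.induction x hS

section Collapse

variable {X : Type u} {r : X → X → Prop} (hw : WellFounded r)

noncomputable def collapse : X → ZFSet.{u} :=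
  hw.fix fun x ih => ZFSet.range fun y : {y // r y x} => ih y.1 y.2

theorem mem_collapse {x : X} {s : ZFSet.{u}} :
    s ∈ collapse hw x ↔ ∃ y, r y x ∧ collapse hw y = s := by
  rw [collapse, WellFounded.fix_eq, ZFSet.mem_range, Subtype.exists]
  simp only [exists_prop]

theorem collapse_mem_collapse {x y : X} (h : r y x) : collapse hw y ∈ collapse hw x :=
  (mem_collapse hw).2 ⟨y, h, rfl⟩

theorem collapse_eq_empty {x : X} (h : ∀ y, ¬ r y x) : collapse hw x = ∅ :=
  (ZFSet.eq_empty _).2 fun _ hs => by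
    obtain ⟨y, hyx, -⟩ := (mem_collapse hw).1 hs
    exact h y hyx

theorem collapse_eq_insert {x y : X} (h : ∀ z, r z y ↔ z = x ∨ r z x) :
    collapse hw y = insert (collapse hw x) (collapse hw x) := by
  ext s
  simp only [mem_collapse hw, ZFSet.mem_insert_iff, h, or_and_right, exists_or, exists_eq_left,
    eq_comm (a := s)]

variable {hw}

theorem collapse_injective (hext : IsExtRel r) : Function.Injective (collapse hw) := by
  intro x y hxy
  induction x using hw.induction generalizing y with
  | _ x ih =>
    refine hext x y fun z => ⟨fun hzx => ?_, fun hzy => ?_⟩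
    · obtain ⟨w, hwy, hwz⟩ := (mem_collapse hw).1 (hxy ▸ collapse_mem_collapse hw hzx)
      rwa [ih z hzx hwz.symm]
    · obtain ⟨w, hwx, hwz⟩ := (mem_collapse hw).1 (hxy ▸ collapse_mem_collapse hw hzy)
      rwa [← ih w hwx hwz]

theorem collapse_mem_collapse_iff (hext : IsExtRel r) {x y : X} :
    collapse hw y ∈ collapse hw x ↔ r y x := by
  simp only [mem_collapse hw, (collapse_injective hext).eq_iff, exists_eq_right]

theorem range_collapse {x₀ : X} (hacc : ∀ x, ReflTransGen r x x₀) :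
    Set.range (collapse hw) = {s | ReflTransGen (· ∈ ·) s (collapse hw x₀)} := by
  ext s
  constructor
  · rintro ⟨x, rfl⟩
    exact (hacc x).lift (p := fun s t => s ∈ t) _ fun _ _ h => collapse_mem_collapse hw h
  · intro hs
    induction hs using ReflTransGen.head_induction_on with
    | refl => exact ⟨x₀, rfl⟩
    | head hst _ ih =>
      obtain ⟨x, rfl⟩ := ih
      obtain ⟨y, -, rfl⟩ := (mem_collapse hw).1 hst
      exact ⟨y, rfl⟩

end Collapse

section PointedIso

variable {X Y : Type u} {rX : X → X → Prop} {rY : Y → Y → Prop}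
  {hwX : WellFounded rX} {hwY : WellFounded rY}

theorem collapse_equiv_apply (f : X ≃ Y) (hf : ∀ a b, rX a b ↔ rY (f a) (f b)) (x : X) :
    collapse hwY (f x) = collapse hwX x := by
  induction x using hwX.induction with
  | _ x ih =>
    ext s
    rw [mem_collapse, mem_collapse, f.surjective.exists]
    refine exists_congr fun a => ?_
    rw [← hf]
    exact and_congr_right fun hax => by rw [ih a hax]

theorem pIso_iff_collapse_eq (hextX : IsExtRel rX) (hextY : IsExtRel rY) {x₀ : X} {y₀ : Y}
    (haccX : ∀ x, ReflTransGen rX x x₀) (haccY : ∀ y, ReflTransGen rY y y₀) :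
    PIso rX rY x₀ y₀ ↔ collapse hwX x₀ = collapse hwY y₀ := by
  constructor
  · rintro ⟨f, hf, rfl⟩
    exact (collapse_equiv_apply f hf x₀).symm
  · intro h
    have hrange : Set.range (collapse hwX) = Set.range (collapse hwY) := by
      rw [range_collapse haccX, range_collapse haccY, h]
    obtain ⟨f, hf⟩ : ∃ f : X ≃ Y, ∀ x, collapse hwY (f x) = collapse hwX x :=
      ⟨(Equiv.ofInjective _ (collapse_injective hextX)).trans
        ((Equiv.setCongr hrange).trans (Equiv.ofInjective _ (collapse_injective hextY)).symm),
        fun _ => Equiv.apply_ofInjective_symm (collapse_injective hextY) _⟩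
    refine ⟨f, fun a b => ?_, collapse_injective hextY (by rw [hf, h])⟩
    rw [← collapse_mem_collapse_iff (hw := hwX) hextX,
      ← collapse_mem_collapse_iff (hw := hwY) hextY, hf, hf]

end PointedIso

section Below

variable {X : Type u} {r : X → X → Prop}

theorem reflTransGen_belowRel_root {x : X} (b : Below r x) :
    ReflTransGen (belowRel r x) b (belowRoot r x) := by
  obtain ⟨a, hax⟩ := b
  induction hax using ReflTransGen.head_induction_on with
  | refl => exact .refl
  | head hac hcx ih => exact .head (show belowRel r x ⟨_, .head hac hcx⟩ ⟨_, hcx⟩ from hac) ih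

theorem wellFounded_belowRel (hw : WellFounded r) (x : X) : WellFounded (belowRel r x) :=
  InvImage.wf Subtype.val hw

theorem isExtRel_belowRel (hext : IsExtRel r) (x : X) : IsExtRel (belowRel r x) := by
  intro a b h
  refine Subtype.ext (hext a.1 b.1 fun z => ⟨fun hza => ?_, fun hzb => ?_⟩)
  · exact (h ⟨z, a.2.head hza⟩).1 hza
  · exact (h ⟨z, b.2.head hzb⟩).2 hzb

theorem collapse_belowRel (hw : WellFounded r) {x : X} (b : Below r x) :
    collapse (wellFounded_belowRel hw x) b = collapse hw b.1 := by
  induction b using (wellFounded_belowRel hw x).induction with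
  | _ b ih =>
    ext s
    rw [mem_collapse, mem_collapse]
    constructor
    · rintro ⟨c, hcb, rfl⟩
      exact ⟨c.1, hcb, (ih c hcb).symm⟩
    · rintro ⟨y, hyb, rfl⟩
      exact ⟨⟨y, b.2.head hyb⟩, hyb, ih _ hyb⟩

end Below

theorem ZFSet.mem_omega_iff {s : ZFSet.{u}} :
    s ∈ ZFSet.omega ↔ ∃ n, s = ZFSet.mk (PSet.ofNat n) := by
  induction s using Quotient.inductionOn with
  | _ x =>
    rw [ZFSet.mk_eq, ZFSet.omega, ZFSet.mk_mem_iff, PSet.mem_def]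
    simp only [ZFSet.eq]
    exact ⟨fun ⟨⟨n⟩, h⟩ => ⟨n, h⟩, fun ⟨n, h⟩ => ⟨⟨n⟩, h⟩⟩

theorem collapse_ulift_natCast (n : ℕ) :
    collapse (wellFounded_lt (α := ULift.{u} ℕ∞)) (ULift.up (n : ℕ∞)) =
      ZFSet.mk (PSet.ofNat n) := by
  induction n with
  | zero => exact collapse_eq_empty _ fun ⟨m⟩ h => not_lt_zero (ULift.up_lt.1 h)
  | succ n ih =>
    rw [collapse_eq_insert _ (x := ULift.up (n : ℕ∞)) fun ⟨m⟩ => ?_, ih]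
    · rfl
    rw [ULift.up_lt, ULift.up_lt, ULift.up_inj, Nat.cast_add_one,
      ENat.lt_add_one_iff (ENat.natCast_ne_top n), le_iff_eq_or_lt]

namespace WEApg

theorem wellFounded (X : WEApg.{u}) : WellFounded X.rel :=
  isWFRel_iff_wellFounded.1 X.wf

noncomputable def set (X : WEApg.{u}) : ZFSet.{u} :=
  collapse X.wellFounded X.root

def below (X : WEApg.{u}) (x : X.carrier) : WEApg.{u} where
  carrier := Below X.rel x
  rel := belowRel X.rel x
  root := belowRoot X.rel x
  acc := reflTransGen_belowRel_root
  wf := isWFRel_iff_wellFounded.2 (wellFounded_belowRel X.wellFounded x)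
  ext := isExtRel_belowRel X.ext x

theorem set_below (X : WEApg.{u}) (x : X.carrier) :
    (X.below x).set = collapse X.wellFounded x :=
  collapse_belowRel X.wellFounded (belowRoot X.rel x)

theorem iso_iff_set_eq (X Y : WEApg.{u}) : X.Iso Y ↔ X.set = Y.set :=
  pIso_iff_collapse_eq X.ext Y.ext X.acc Y.acc

theorem mem_iff_set_mem (X Y : WEApg.{u}) : X.Mem Y ↔ X.set ∈ Y.set := by
  change (∃ y, Y.rel y Y.root ∧ X.Iso (Y.below y)) ↔ _
  rw [set, mem_collapse]
  refine exists_congr fun y => and_congr_right fun _ => ?_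
  rw [iso_iff_set_eq, set_below, eq_comm]

theorem exists_set_eq_of_mem {X : WEApg.{u}} {s : ZFSet.{u}} (hs : s ∈ X.set) :
    ∃ Z : WEApg.{u}, Z.set = s := by
  obtain ⟨x, -, rfl⟩ := (mem_collapse _).1 hs
  exact ⟨X.below x, X.set_below x⟩

theorem notMem_of_set_eq_empty {W : WEApg.{u}} (hW : W.set = ∅) (Z : WEApg.{u}) :
    ¬ Z.Mem W := by
  rw [mem_iff_set_mem, hW]
  exact ZFSet.notMem_empty _

theorem isSuccOf_iff {S W : WEApg.{u}} : IsSuccOf S W ↔ S.set = insert W.set W.set := by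
  have hsucc : ∀ Z : WEApg.{u}, (Z.Mem W ∨ Z.Iso W) ↔ Z.set ∈ insert W.set W.set := fun Z => by
    rw [mem_iff_set_mem, iso_iff_set_eq, ZFSet.mem_insert_iff, or_comm]
  simp_rw [IsSuccOf, hsucc, mem_iff_set_mem]
  constructor
  · intro h
    ext s
    constructor
    · intro hs
      obtain ⟨Z, rfl⟩ := exists_set_eq_of_mem hs
      exact (h Z).1 hs
    · intro hs
      obtain ⟨Z, rfl⟩ : ∃ Z : WEApg.{u}, Z.set = s := by
        rcases ZFSet.mem_insert_iff.1 hs with rfl | hs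
        exacts [⟨W, rfl⟩, exists_set_eq_of_mem hs]
      exact (h Z).2 hs
  · intro h Z
    rw [h]

def ofWellOrder (α : Type u) [LinearOrder α] [WellFoundedLT α] [OrderTop α] : WEApg.{u} where
  carrier := α
  rel := (· < ·)
  root := ⊤
  acc x := (le_top : x ≤ ⊤).lt_or_eq.elim .single fun h => h ▸ .refl
  wf := isWFRel_iff_wellFounded.2 wellFounded_lt
  ext _ _ h := le_antisymm (le_of_forall_lt fun z => (h z).1) (le_of_forall_lt fun z => (h z).2)

def omega : WEApg.{u} :=
  ofWellOrder (ULift.{u} ℕ∞)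

theorem omega_set : omega.{u}.set = ZFSet.omega := by
  change collapse (wellFounded_lt (α := ULift.{u} ℕ∞)) ⊤ = _
  ext s
  rw [mem_collapse, ZFSet.mem_omega_iff]
  constructor
  · rintro ⟨⟨m⟩, hm, rfl⟩
    obtain ⟨n, rfl⟩ := ENat.ne_top_iff_exists.1 (ULift.up_lt.1 hm).ne
    exact ⟨n, collapse_ulift_natCast n⟩
  · rintro ⟨n, rfl⟩
    exact ⟨ULift.up (n : ℕ∞), ULift.up_lt.2 (ENat.natCast_lt_top n), collapse_ulift_natCast n⟩

theorem mem_of_set_eq_ofNat {T : WEApg.{u}}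
    (hzero : ∀ W : WEApg.{u}, (∀ Z : WEApg.{u}, ¬ Z.Mem W) → W.Mem T)
    (hsucc : ∀ W S : WEApg.{u}, W.Mem T → IsSuccOf S W → S.Mem T) (n : ℕ) {W : WEApg.{u}}
    (hW : W.set = ZFSet.mk (PSet.ofNat n)) : W.Mem T := by
  induction n generalizing W with
  | zero => exact hzero W (notMem_of_set_eq_empty hW)
  | succ n ih =>
    have hmem : ZFSet.mk (PSet.ofNat n) ∈ W.set := by
      rw [hW]
      exact ZFSet.mem_insert (ZFSet.mk (PSet.ofNat n)) (ZFSet.mk (PSet.ofNat n))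
    obtain ⟨V, hV⟩ := exists_set_eq_of_mem hmem
    exact hsucc V W (ih hV) (isSuccOf_iff.2 (by rw [hW, hV]; rfl))

end WEApg

/-- The axiom of infinity holds for well-founded extensional apgs. -/
theorem weapg_infinity :
    ∃ Omega : WEApg.{u},
      (∃ W : WEApg.{u}, W.Mem Omega ∧ ∀ Z : WEApg.{u}, ¬ Z.Mem W) ∧
      (∀ W S : WEApg.{u}, W.Mem Omega → IsSuccOf S W → S.Mem Omega) ∧
      (∀ T : WEApg.{u},
        ((∀ W : WEApg.{u}, (∀ Z : WEApg.{u}, ¬ Z.Mem W) → W.Mem T) ∧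
         (∀ W S : WEApg.{u}, W.Mem T → IsSuccOf S W → S.Mem T)) →
        ∀ W : WEApg.{u}, W.Mem Omega → W.Mem T) := by
  refine ⟨WEApg.omega, ?_, fun W S hW hS => ?_, fun T ⟨hzero, hsucc⟩ W hW => ?_⟩
  · obtain ⟨W, hW⟩ := WEApg.exists_set_eq_of_mem (WEApg.omega_set.symm ▸ ZFSet.omega_zero)
    refine ⟨W, ?_, WEApg.notMem_of_set_eq_empty hW⟩
    rw [WEApg.mem_iff_set_mem, hW, WEApg.omega_set]
    exact ZFSet.omega_zero
  · rw [WEApg.mem_iff_set_mem, WEApg.omega_set] at hW ⊢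
    rw [WEApg.isSuccOf_iff.1 hS]
    exact ZFSet.omega_succ hW
  · rw [WEApg.mem_iff_set_mem, WEApg.omega_set, ZFSet.mem_omega_iff] at hW
    obtain ⟨n, hn⟩ := hW
    exact WEApg.mem_of_set_eq_ofNat hzero hsucc n hn
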